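/- Let X be a bounded-below complex and Y a bounded-above complex in an additive category 𝔞. Then Hom_{K(𝔞)/K^b(𝔞)}(X, Y) = 0, i.e. every morphism from X to Y in the Verdier quotient of the homotopy category by the bounded complexes vanishes. -/

import Mathlib

open CategoryTheory Limits ZeroObject

section Brutal

variable {C : Type*} [Category C] [Preadditive C] [HasZeroObject C]

/-- The brutal truncation `σ_{≥ n} X` of a cochain complex. -/
noncomputable def truncGE (X : CochainComplex C ℤ) (n : ℤ) : CochainComplex C ℤ :=
  CochainComplex.of (fun i => if n ≤ i then X.X i else 0)
    (fun i =>
      if hi : n ≤ i then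
        eqToHom (if_pos hi) ≫ X.d i (i + 1) ≫ eqToHom (if_pos (by omega : n ≤ i + 1)).symm
      else 0)
    (fun i => by
      by_cases hi : n ≤ i
      · rw [dif_pos hi, dif_pos (show n ≤ i + 1 by omega)]; simp
      · rw [dif_neg hi]; simp)

lemma truncGE_X (X : CochainComplex C ℤ) (n i : ℤ) :
    (truncGE X n).X i = if n ≤ i then X.X i else 0 := rfl

lemma truncGE_d (X : CochainComplex C ℤ) (n i : ℤ) :
    (truncGE X n).d i (i + 1) =
      if hi : n ≤ i then
        eqToHom (if_pos hi) ≫ X.d i (i + 1) ≫ eqToHom (if_pos (by omega : n ≤ i + 1)).symm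
      else 0 := by
  simp only [truncGE, CochainComplex.of_d]

/-- The brutal truncation `σ_{≤ n} X` of a cochain complex. -/
noncomputable def truncLE (X : CochainComplex C ℤ) (n : ℤ) : CochainComplex C ℤ :=
  CochainComplex.of (fun i => if i ≤ n then X.X i else 0)
    (fun i =>
      if hj : i + 1 ≤ n then
        eqToHom (if_pos (by omega : i ≤ n)) ≫ X.d i (i + 1) ≫ eqToHom (if_pos hj).symm
      else 0)
    (fun i => by
      by_cases hj : i + 1 + 1 ≤ n
      · rw [dif_pos (show i + 1 ≤ n by omega), dif_pos hj]; simp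
      · rw [dif_neg hj]; simp)

lemma truncLE_X (X : CochainComplex C ℤ) (n i : ℤ) :
    (truncLE X n).X i = if i ≤ n then X.X i else 0 := rfl

lemma truncLE_d (X : CochainComplex C ℤ) (n i : ℤ) :
    (truncLE X n).d i (i + 1) =
      if hj : i + 1 ≤ n then
        eqToHom (if_pos (by omega : i ≤ n)) ≫ X.d i (i + 1) ≫ eqToHom (if_pos hj).symm
      else 0 := by
  simp only [truncLE, CochainComplex.of_d]

/-- The canonical inclusion `σ_{≥ n} X ⟶ X`. -/
noncomputable def truncGEι (X : CochainComplex C ℤ) (n : ℤ) : truncGE X n ⟶ X where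
  f i := if hi : n ≤ i then eqToHom ((truncGE_X X n i).trans (if_pos hi)) else 0
  comm' := by
    rintro i j (rfl : i + 1 = j)
    rw [truncGE_d]
    by_cases hi : n ≤ i
    · rw [dif_pos hi, dif_pos hi, dif_pos (show n ≤ i + 1 by omega)]
      erw [Category.assoc, Category.assoc, eqToHom_trans, eqToHom_refl, Category.comp_id]
      rfl
    · rw [dif_neg hi, dif_neg hi]
      apply IsZero.eq_of_src; rw [truncGE_X, if_neg hi]; exact isZero_zero C

/-- The canonical projection `X ⟶ σ_{≤ n} X`. -/
noncomputable def truncLEπ (X : CochainComplex C ℤ) (n : ℤ) : X ⟶ truncLE X n where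
  f i := if hi : i ≤ n then eqToHom ((if_pos hi).symm.trans (truncLE_X X n i).symm) else 0
  comm' := by
    rintro i j (rfl : i + 1 = j)
    rw [truncLE_d]
    by_cases hj : i + 1 ≤ n
    · rw [dif_pos hj, dif_pos (show i ≤ n by omega), dif_pos hj]
      erw [eqToHom_trans_assoc, eqToHom_refl, Category.id_comp]
      rfl
    · rw [dif_neg hj, dif_neg hj]
      apply IsZero.eq_of_tgt; rw [truncLE_X, if_neg hj]; exact isZero_zero C

/-- The canonical projection `σ_{≤ a} X ⟶ σ_{≤ b} X` for `b ≤ a`. -/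
noncomputable def truncLEmap (X : CochainComplex C ℤ) (a b : ℤ) (hba : b ≤ a) :
    truncLE X a ⟶ truncLE X b where
  f i := if hi : i ≤ b then
      eqToHom (((truncLE_X X a i).trans (if_pos (hi.trans hba))).trans
        (((truncLE_X X b i).trans (if_pos hi)).symm))
    else 0
  comm' := by
    rintro i j (rfl : i + 1 = j)
    rw [truncLE_d, truncLE_d]
    by_cases hj : i + 1 ≤ b
    · rw [dif_pos hj, dif_pos (show i ≤ b by omega), dif_pos (show i + 1 ≤ a by omega),
        dif_pos hj]
      erw [eqToHom_trans_assoc, Category.assoc, Category.assoc, eqToHom_trans]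
      rfl
    · rw [dif_neg hj, dif_neg hj]
      apply IsZero.eq_of_tgt; rw [truncLE_X, if_neg hj]; exact isZero_zero C

/-- A complex is bounded above if its components vanish in all sufficiently
large degrees. -/
def BoundedAbove (X : CochainComplex C ℤ) : Prop :=
  ∃ b : ℤ, ∀ i : ℤ, b < i → IsZero (X.X i)

/-- A complex is bounded below if its components vanish in all sufficiently
small degrees. -/
def BoundedBelow (X : CochainComplex C ℤ) : Prop :=
  ∃ a : ℤ, ∀ i : ℤ, i < a → IsZero (X.X i)

/-- A complex is bounded if it is bounded above and bounded below. -/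
def BoundedComplex (X : CochainComplex C ℤ) : Prop :=
  BoundedAbove X ∧ BoundedBelow X

variable (C) [HasBinaryBiproducts C]

open Pretriangulated in
/-- The class of morphisms in the homotopy category `K(C)` whose cone is isomorphic
to a bounded complex; the Verdier quotient `K(C)/K^b(C)` is the localization of
`K(C)` at this class. -/
noncomputable def Wb : MorphismProperty (HomotopyCategory C (ComplexShape.up ℤ)) :=
  fun X Y f =>
    ∃ (Z : HomotopyCategory C (ComplexShape.up ℤ)) (g : Y ⟶ Z) (h : Z ⟶ X⟦(1 : ℤ)⟧),
      (Triangle.mk f g h ∈ distTriang (HomotopyCategory C (ComplexShape.up ℤ))) ∧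
      ∃ Z₀ : CochainComplex C ℤ, BoundedComplex Z₀ ∧
        Nonempty (Z ≅ (HomotopyCategory.quotient C (ComplexShape.up ℤ)).obj Z₀)

end Brutal

section Aux

open Pretriangulated

variable {C : Type*} [Category C] [Preadditive C] [HasZeroObject C]

lemma isZero_ite (c : Prop) [Decidable c] (A : C) (h : c → IsZero A) :
    IsZero (if c then A else 0) := by
  split_ifs with hc
  · exact h hc
  · exact Limits.isZero_zero C

lemma hom_eq_zero_cx {A B : CochainComplex C ℤ}
    (h : ∀ i : ℤ, IsZero (A.X i) ∨ IsZero (B.X i)) (φ : A ⟶ B) : φ = 0 := by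
  ext i
  rcases h i with h' | h'
  · exact h'.eq_of_src _ _
  · exact h'.eq_of_tgt _ _

lemma homK_eq_zero {Z₁ Z₂ : HomotopyCategory C (ComplexShape.up ℤ)} {A B : CochainComplex C ℤ}
    (e₁ : Z₁ ≅ (HomotopyCategory.quotient C (ComplexShape.up ℤ)).obj A)
    (e₂ : Z₂ ≅ (HomotopyCategory.quotient C (ComplexShape.up ℤ)).obj B)
    (h : ∀ i : ℤ, IsZero (A.X i) ∨ IsZero (B.X i)) (u : Z₁ ⟶ Z₂) : u = 0 := by
  obtain ⟨ψ, hψ⟩ := (HomotopyCategory.quotient C (ComplexShape.up ℤ)).map_surjective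
    (e₁.inv ≫ u ≫ e₂.hom)
  have h0 : e₁.inv ≫ u ≫ e₂.hom = 0 := by
    rw [← hψ, hom_eq_zero_cx h ψ, Functor.map_zero]
  have hu : u = e₁.hom ≫ (e₁.inv ≫ u ≫ e₂.hom) ≫ e₂.inv := by simp
  rw [hu, h0, zero_comp, comp_zero]

lemma boundedComplex_shift {A : CochainComplex C ℤ} (h : BoundedComplex A) (n : ℤ) :
    BoundedComplex ((CategoryTheory.shiftFunctor (CochainComplex C ℤ) n).obj A) := by
  obtain ⟨⟨b, hb⟩, ⟨a, ha⟩⟩ := h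
  exact ⟨⟨b - n, fun i hi => hb (i + n) (by omega)⟩,
    ⟨a - n, fun i hi => ha (i + n) (by omega)⟩⟩

lemma boundedComplex_truncGE {Y : CochainComplex C ℤ} (hY : BoundedAbove Y) (n : ℤ) :
    BoundedComplex (truncGE Y n) := by
  obtain ⟨b, hb⟩ := hY
  constructor
  · exact ⟨b, fun i hi => isZero_ite _ _ (fun _ => hb i hi)⟩
  · refine ⟨n, fun i hi => ?_⟩
    rw [truncGE_X, if_neg (by omega)]
    exact Limits.isZero_zero C

variable (C) [HasBinaryBiproducts C]

/-- The triangulated subcategory of `K(C)` of objects isomorphic to bounded complexes. -/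
noncomputable def Kb : ObjectProperty (HomotopyCategory C (ComplexShape.up ℤ)) :=
  fun Z => ∃ Z₀ : CochainComplex C ℤ, BoundedComplex Z₀ ∧
    Nonempty (Z ≅ (HomotopyCategory.quotient C (ComplexShape.up ℤ)).obj Z₀)

instance : (Kb C).IsTriangulated where
  exists_zero := by
    refine ⟨(HomotopyCategory.quotient C (ComplexShape.up ℤ)).obj 0,
      (HomotopyCategory.quotient C (ComplexShape.up ℤ)).map_isZero (Limits.isZero_zero _),
      0, ⟨⟨0, fun i _ => ?_⟩, ⟨0, fun i _ => ?_⟩⟩, ⟨Iso.refl _⟩⟩ <;>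
    exact (HomologicalComplex.eval C (ComplexShape.up ℤ) i).map_isZero (Limits.isZero_zero _)
  isStableUnderShiftBy n := ⟨by
    rintro Z ⟨Z₀, hZ₀, ⟨e⟩⟩
    exact ⟨(CategoryTheory.shiftFunctor (CochainComplex C ℤ) n).obj Z₀,
      boundedComplex_shift hZ₀ n,
      ⟨(CategoryTheory.shiftFunctor _ n).mapIso e ≪≫
        (((HomotopyCategory.quotient C (ComplexShape.up ℤ)).commShiftIso n).symm.app Z₀)⟩⟩⟩
  ext₂' := by
    rintro T hT ⟨A, hA, ⟨e₁⟩⟩ ⟨B, hB, ⟨e₃⟩⟩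
    have hT' := inv_rot_of_distTriang _ hT
    let e₀ : T.invRotate.obj₁ ≅ (HomotopyCategory.quotient C (ComplexShape.up ℤ)).obj
        ((CategoryTheory.shiftFunctor (CochainComplex C ℤ) (-1 : ℤ)).obj B) :=
      (CategoryTheory.shiftFunctor _ (-1 : ℤ)).mapIso e₃ ≪≫
        (((HomotopyCategory.quotient C (ComplexShape.up ℤ)).commShiftIso (-1 : ℤ)).symm.app B)
    obtain ⟨ψ, hψ⟩ := (HomotopyCategory.quotient C (ComplexShape.up ℤ)).map_surjective
      (e₀.inv ≫ T.invRotate.mor₁ ≫ e₁.hom)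
    obtain ⟨e', he'₁, he'₂⟩ := exists_iso_of_arrow_iso _ _ hT'
      (HomotopyCategory.mappingCone_triangleh_distinguished ψ)
      (Arrow.isoMk e₀ e₁ (by show e₀.hom ≫ (HomotopyCategory.quotient C (ComplexShape.up ℤ)).map ψ = T.invRotate.mor₁ ≫ e₁.hom; rw [hψ]; simp))
    refine ⟨(HomotopyCategory.quotient C (ComplexShape.up ℤ)).obj
        (CochainComplex.mappingCone ψ), ⟨CochainComplex.mappingCone ψ, ?_, ⟨Iso.refl _⟩⟩,
      ⟨(Triangle.π₃.mapIso e' : _)⟩⟩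
    obtain ⟨⟨b₁, hb₁⟩, ⟨a₁, ha₁⟩⟩ := boundedComplex_shift hB (-1 : ℤ)
    obtain ⟨⟨b₂, hb₂⟩, ⟨a₂, ha₂⟩⟩ := hA
    constructor
    · refine ⟨max (b₁ - 1) b₂, fun i hi => ?_⟩
      exact ((Limits.biprod_isZero_iff _ _).2
        ⟨hb₁ (i + 1) (by omega), hb₂ i (by omega)⟩).of_iso
        (HomologicalComplex.homotopyCofiber.XIsoBiprod ψ i (i + 1) rfl)
    · refine ⟨min (a₁ - 1) a₂, fun i hi => ?_⟩
      exact ((Limits.biprod_isZero_iff _ _).2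
        ⟨ha₁ (i + 1) (by omega), ha₂ i (by omega)⟩).of_iso
        (HomologicalComplex.homotopyCofiber.XIsoBiprod ψ i (i + 1) rfl)

lemma Wb_eq_W : Wb C = (Kb C).trW := by
  funext X Y f
  apply propext
  constructor
  · rintro ⟨Z, g, h, hd, hP⟩
    exact ⟨Z, g, h, hd, hP⟩
  · rintro ⟨Z, g, h, hd, hP⟩
    exact ⟨Z, g, h, hd, hP⟩

variable {C}

/-- The brutal truncation short exact sequence. -/
noncomputable def truncSC (Y : CochainComplex C ℤ) (m : ℤ) : ShortComplex (CochainComplex C ℤ) :=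
  ShortComplex.mk (truncGEι Y (m + 1)) (truncLEπ Y m) (by
    ext i
    dsimp [truncGEι, truncLEπ]
    by_cases h : i ≤ m
    · rw [dif_neg (show ¬ m + 1 ≤ i by omega), zero_comp]
    · rw [dif_neg h, comp_zero])

/-- The degreewise splittings of the brutal truncation sequence. -/
noncomputable def truncSplitting (Y : CochainComplex C ℤ) (m n : ℤ) :
    ((truncSC Y m).map (HomologicalComplex.eval C (ComplexShape.up ℤ) n)).Splitting where
  r := if h : m + 1 ≤ n then eqToHom ((truncGE_X Y (m + 1) n).trans (if_pos h)).symm else 0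
  s := if h : n ≤ m then eqToHom ((truncLE_X Y m n).trans (if_pos h)) else 0
  f_r := by
    show (truncGEι Y (m + 1)).f n ≫ (if h : m + 1 ≤ n then eqToHom ((truncGE_X Y (m + 1) n).trans (if_pos h)).symm else 0 :
      Y.X n ⟶ (truncGE Y (m + 1)).X n) = 𝟙 ((truncGE Y (m + 1)).X n)
    dsimp only [truncGEι]
    by_cases h : m + 1 ≤ n
    · rw [dif_pos h, dif_pos h, eqToHom_trans, eqToHom_refl]
    · rw [dif_neg h, dif_neg h, zero_comp]
      exact (isZero_ite _ _ (fun hc => absurd hc h)).eq_of_src _ _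
  s_g := by
    show (if h : n ≤ m then eqToHom ((truncLE_X Y m n).trans (if_pos h)) else 0 :
      (truncLE Y m).X n ⟶ Y.X n) ≫ (truncLEπ Y m).f n = 𝟙 ((truncLE Y m).X n)
    dsimp only [truncLEπ]
    by_cases h : n ≤ m
    · rw [dif_pos h, dif_pos h, eqToHom_trans, eqToHom_refl]
    · rw [dif_neg h, dif_neg h, comp_zero]
      exact (isZero_ite _ _ (fun hc => absurd hc h)).eq_of_src _ _
  id := by
    show (if h : m + 1 ≤ n then eqToHom ((truncGE_X Y (m + 1) n).trans (if_pos h)).symm else 0 :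
      Y.X n ⟶ (truncGE Y (m + 1)).X n) ≫ (truncGEι Y (m + 1)).f n +
      (truncLEπ Y m).f n ≫ (if h : n ≤ m then eqToHom ((truncLE_X Y m n).trans (if_pos h)) else 0 :
      (truncLE Y m).X n ⟶ Y.X n) = 𝟙 (Y.X n)
    dsimp only [truncGEι, truncLEπ]
    by_cases h : m + 1 ≤ n
    · rw [dif_pos h, dif_pos h, dif_neg (show ¬ n ≤ m by omega),
        dif_neg (show ¬ n ≤ m by omega), eqToHom_trans, eqToHom_refl, comp_zero, add_zero]
    · rw [dif_neg h, dif_neg h, dif_pos (show n ≤ m by omega), dif_pos (show n ≤ m by omega),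
        zero_comp, eqToHom_trans, eqToHom_refl, zero_add]

lemma truncSC_triangleh_distinguished (Y : CochainComplex C ℤ) (m : ℤ) :
    CochainComplex.trianglehOfDegreewiseSplit (truncSC Y m) (truncSplitting Y m) ∈
      distTriang (HomotopyCategory C (ComplexShape.up ℤ)) :=
  (HomotopyCategory.distinguished_iff_iso_trianglehOfDegreewiseSplit _).2 ⟨_, _, ⟨Iso.refl _⟩⟩

lemma W_Qπ {Y : CochainComplex C ℤ} (hY : BoundedAbove Y) (m : ℤ) :
    (Kb C).trW ((HomotopyCategory.quotient C (ComplexShape.up ℤ)).map (truncLEπ Y m)) :=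
  ObjectProperty.trW.mk' (Kb C) (truncSC_triangleh_distinguished Y m)
    ⟨truncGE Y (m + 1), boundedComplex_truncGE hY (m + 1), ⟨Iso.refl _⟩⟩

end Aux


/-- **No maps from bounded-below to bounded-above complexes in `K(𝔞)/K^b(𝔞)`.**
If `X` is bounded below and `Y` is bounded above, then every morphism from `X` to `Y`
in the Verdier quotient of the homotopy category `K(𝔞)` by the bounded complexes
(realized as any localization `L` of `K(𝔞)` at the class `Wb` of morphisms whose cone
is bounded) is zero. -/
theorem hom_eq_zero_in_quotient_of_boundedBelow_of_boundedAbove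
    {C : Type*} [Category C] [Preadditive C] [HasZeroObject C] [HasBinaryBiproducts C]
    {D : Type*} [Category D] [Preadditive D]
    (L : HomotopyCategory C (ComplexShape.up ℤ) ⥤ D) [L.IsLocalization (Wb C)]
    (X Y : CochainComplex C ℤ) (hX : BoundedBelow X) (hY : BoundedAbove Y)
    (f : L.obj ((HomotopyCategory.quotient C (ComplexShape.up ℤ)).obj X) ⟶
         L.obj ((HomotopyCategory.quotient C (ComplexShape.up ℤ)).obj Y)) :
    f = 0 := by
  let Q := HomotopyCategory.quotient C (ComplexShape.up ℤ)
  haveI hL : L.IsLocalization ((Kb C).trW) := by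
    rw [← Wb_eq_W C]; infer_instance
  have hinv := CategoryTheory.Localization.inverts L ((Kb C).trW)
  have key : ∀ (f' : L.obj (Q.obj X) ⟶ L.obj (Q.obj Y)),
      ∃ (V : HomotopyCategory C (ComplexShape.up ℤ)) (r : V ⟶ Q.obj X)
        (_ : (Kb C).trW r) (a' : ℤ),
        ∀ m : ℤ, m < a' → L.map r ≫ f' ≫ L.map (Q.map (truncLEπ Y m)) =
          L.map (0 : V ⟶ Q.obj (truncLE Y m)) := by
    intro f'
    obtain ⟨φ, hφ⟩ := Localization.exists_rightFraction L ((Kb C).trW) f'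
    obtain ⟨Z, gZ, hZ, hdist, Z₀, hZ₀, ⟨eZ⟩⟩ := φ.hs
    obtain ⟨aX, haX⟩ := hX
    obtain ⟨aZ, haZ⟩ := hZ₀.2
    refine ⟨φ.X', φ.s, φ.hs, min aX aZ, fun m hm => ?_⟩
    have hzero : φ.f ≫ Q.map (truncLEπ Y m) = 0 := by
      have hT' := Pretriangulated.inv_rot_of_distTriang _ hdist
      have h₁ : (Pretriangulated.Triangle.mk φ.s gZ hZ).invRotate.mor₁ ≫
          (φ.f ≫ Q.map (truncLEπ Y m)) = 0 := by
        refine homK_eq_zero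
          ((CategoryTheory.shiftFunctor (HomotopyCategory C (ComplexShape.up ℤ))
              (-1 : ℤ)).mapIso eZ ≪≫ ((Q.commShiftIso (-1 : ℤ)).symm.app Z₀))
          (Iso.refl _) (fun i => ?_) _
        by_cases hi : i ≤ m
        · exact Or.inl (haZ (i + (-1)) (by omega))
        · exact Or.inr (isZero_ite _ _ (fun hc => absurd hc hi))
      obtain ⟨q, hq⟩ := Pretriangulated.Triangle.yoneda_exact₂ _ hT' _ h₁
      have hq0 : q = 0 := by
        refine homK_eq_zero (Iso.refl _) (Iso.refl _) (fun i => ?_) q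
        by_cases hi : i ≤ m
        · exact Or.inl (haX i (by omega))
        · exact Or.inr (isZero_ite _ _ (fun hc => absurd hc hi))
      rw [hq0, comp_zero] at hq
      exact hq
    have h2 : L.map φ.s ≫ f' = L.map φ.f := by
      rw [hφ]; exact φ.map_s_comp_map L hinv
    rw [← Category.assoc, h2, ← L.map_comp, hzero]
  obtain ⟨V₁, r₁, hr₁, a₁, h₁⟩ := key f
  obtain ⟨V₂, r₂, hr₂, a₂, h₂⟩ := key 0
  set m := min a₁ a₂ - 1 with hm
  have E₁ := h₁ m (by omega)
  have E₂ := h₂ m (by omega)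
  rw [zero_comp, comp_zero] at E₂
  haveI : IsIso (L.map (Q.map (truncLEπ Y m))) := hinv _ (W_Qπ hY m)
  obtain ⟨ψ, hψ⟩ := (MorphismProperty.LeftFraction.mk r₂ r₁ hr₁ :
    ((Kb C).trW).LeftFraction V₂ V₁).exists_rightFraction
  haveI : IsIso (L.map ψ.s) := hinv _ ψ.hs
  haveI : IsIso (L.map r₂) := hinv _ hr₂
  haveI : IsIso (L.map (ψ.f ≫ r₁)) := by
    have hρ : L.map (ψ.s ≫ r₂) = L.map (ψ.f ≫ r₁) := by rw [hψ]
    rw [← hρ, L.map_comp]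
    infer_instance
  have hc : ψ.f ≫ (0 : V₁ ⟶ Q.obj (truncLE Y m)) =
      ψ.s ≫ (0 : V₂ ⟶ Q.obj (truncLE Y m)) := by simp
  have hA : L.map (ψ.f ≫ r₁) ≫ f ≫ L.map (Q.map (truncLEπ Y m)) = 0 := by
    rw [L.map_comp, Category.assoc, E₁, ← L.map_comp, hc, L.map_comp, ← E₂, comp_zero]
  have hfπ : f ≫ L.map (Q.map (truncLEπ Y m)) = 0 :=
    (cancel_epi (L.map (ψ.f ≫ r₁))).1 (by rw [hA, comp_zero])
  exact (cancel_mono (L.map (Q.map (truncLEπ Y m)))).1 (by rw [hfπ, zero_comp])
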